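/- arXiv:2407.13573 — 5 statements merged into one kernel-verified Lean document; each statement's English description precedes it below -/
import Mathlib

section
/- For all real numbers x and y, the R₀-conjunction x ∧₀ y := x + y − √(x² + y²) satisfies: x ∧₀ y ≥ 0 if and only if x ≥ 0 and y ≥ 0. -/
namespace Real

lemma sqrt_sq_add_sq_le_add {x y : ℝ} (hx : 0 ≤ x) (hy : 0 ≤ y) : √(x ^ 2 + y ^ 2) ≤ x + y :=
  (sqrt_le_left (add_nonneg hx hy)).2 (by nlinarith)

lemma add_lt_sqrt_sq_add_sq_of_neg {x : ℝ} (hx : x < 0) (y : ℝ) : x + y < √(x ^ 2 + y ^ 2) :=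
  calc x + y < |y| := by linarith [le_abs_self y]
    _ ≤ √(x ^ 2 + y ^ 2) := abs_le_sqrt (by nlinarith)

lemma nonneg_of_add_sub_sqrt_sq_add_sq_nonneg {x y : ℝ} (h : 0 ≤ x + y - √(x ^ 2 + y ^ 2)) :
    0 ≤ x := by
  by_contra! hx
  linarith [add_lt_sqrt_sq_add_sq_of_neg hx y]

end Real

theorem stmt_1 (x y : ℝ) :
    x + y - Real.sqrt (x^2 + y^2) ≥ 0 ↔ x ≥ 0 ∧ y ≥ 0 := by
  refine ⟨fun h ↦ ⟨Real.nonneg_of_add_sub_sqrt_sq_add_sq_nonneg h, ?_⟩,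
    fun ⟨hx, hy⟩ ↦ sub_nonneg.2 (Real.sqrt_sq_add_sq_le_add hx hy)⟩
  rw [add_comm x, add_comm (x ^ 2)] at h
  exact Real.nonneg_of_add_sub_sqrt_sq_add_sq_nonneg h
end

section
/- For all real numbers x and y, the R₀-disjunction x ∨₀ y := x + y + √(x² + y²) satisfies: x ∨₀ y ≥ 0 if and only if x ≥ 0 or y ≥ 0. -/
lemma neg_le_sqrt_sq_add_sq (x y : ℝ) : -y ≤ √(x ^ 2 + y ^ 2) :=
  (neg_le_abs y).trans (Real.abs_le_sqrt (le_add_of_nonneg_left (sq_nonneg x)))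

lemma add_add_sqrt_sq_add_sq_nonneg_of_nonneg {x : ℝ} (hx : 0 ≤ x) (y : ℝ) :
    0 ≤ x + y + √(x ^ 2 + y ^ 2) := by
  linarith [neg_le_sqrt_sq_add_sq x y]

-- `x ^ 2 + y ^ 2 < (x + y) ^ 2` because `x * y > 0`.
lemma add_add_sqrt_sq_add_sq_neg_of_neg {x y : ℝ} (hx : x < 0) (hy : y < 0) :
    x + y + √(x ^ 2 + y ^ 2) < 0 := by
  have hsqrt : √(x ^ 2 + y ^ 2) < -(x + y) :=
    (Real.sqrt_lt' (by linarith)).2 (by nlinarith [mul_pos_of_neg_of_neg hx hy])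
  linarith

theorem stmt_2 (x y : ℝ) :
    x + y + Real.sqrt (x^2 + y^2) ≥ 0 ↔ x ≥ 0 ∨ y ≥ 0 := by
  constructor
  · intro h
    by_contra! hneg
    exact (add_add_sqrt_sq_add_sq_neg_of_neg hneg.1 hneg.2).not_ge h
  · rintro (hx | hy)
    · exact add_add_sqrt_sq_add_sq_nonneg_of_nonneg hx y
    · have h := add_add_sqrt_sq_add_sq_nonneg_of_nonneg hy x
      rw [add_comm (y ^ 2)] at h
      linarith
end

section
/- Let α be a real number with −1 < α ≤ 1. Then for all real x, y, the quantity x² + y² − 2αxy is nonnegative, so the Rα-conjunction x ∧α y = (1/(1+α))·(x + y − √(x² + y² − 2αxy)) is well-defined, and x ∧α y ≥ 0 if and only if x ≥ 0 and y ≥ 0. -/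
/-!
Squaring, `√(x² + y² - 2αxy) ≤ x + y` holds iff `x + y ≥ 0` and
`(x + y)² - (x² + y² - 2αxy) = 2(1 + α)xy ≥ 0`; as `1 + α > 0`, this says that `x + y` and `xy`
are nonnegative, i.e. that `x` and `y` both are.
-/

namespace Rvachev

noncomputable def conj (α x y : ℝ) : ℝ :=
  (1 / (1 + α)) * (x + y - Real.sqrt (x ^ 2 + y ^ 2 - 2 * α * x * y))

theorem radicand_nonneg {α : ℝ} (hα : -1 ≤ α) (hα' : α ≤ 1) (x y : ℝ) :
    0 ≤ x ^ 2 + y ^ 2 - 2 * α * x * y := by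
  nlinarith [sq_nonneg (x - y), sq_nonneg (x + y)]

theorem nonneg_and_nonneg_iff_add_nonneg_and_mul_nonneg {x y : ℝ} :
    0 ≤ x ∧ 0 ≤ y ↔ 0 ≤ x + y ∧ 0 ≤ x * y := by
  constructor
  · rintro ⟨hx, hy⟩
    exact ⟨add_nonneg hx hy, mul_nonneg hx hy⟩
  · rintro ⟨hsum, hprod⟩
    constructor <;> nlinarith

theorem sqrt_radicand_le_add_iff {α : ℝ} (hα : -1 < α) (x y : ℝ) :
    Real.sqrt (x ^ 2 + y ^ 2 - 2 * α * x * y) ≤ x + y ↔ 0 ≤ x ∧ 0 ≤ y := by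
  have hgap : (x + y) ^ 2 - (x ^ 2 + y ^ 2 - 2 * α * x * y) = 2 * (1 + α) * (x * y) := by ring
  have hα₀ : 0 < 2 * (1 + α) := by linarith
  rw [Real.sqrt_le_iff, nonneg_and_nonneg_iff_add_nonneg_and_mul_nonneg, ← sub_nonneg (a := (x + y) ^ 2),
    hgap, mul_nonneg_iff_of_pos_left hα₀]

theorem conj_nonneg_iff {α : ℝ} (hα : -1 < α) (x y : ℝ) :
    0 ≤ conj α x y ↔ 0 ≤ x ∧ 0 ≤ y := by
  have hα₀ : 0 < 1 / (1 + α) := one_div_pos.mpr (by linarith)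
  rw [conj, mul_nonneg_iff_of_pos_left hα₀, sub_nonneg, sqrt_radicand_le_add_iff hα]

end Rvachev

theorem stmt_3 (α : ℝ) (hα : -1 < α) (hα' : α ≤ 1) (x y : ℝ) :
    0 ≤ x^2 + y^2 - 2*α*x*y ∧
    ((1/(1+α)) * (x + y - Real.sqrt (x^2 + y^2 - 2*α*x*y)) ≥ 0 ↔ x ≥ 0 ∧ y ≥ 0) :=
  ⟨Rvachev.radicand_nonneg hα.le hα' x y, Rvachev.conj_nonneg_iff hα x y⟩
end

section
/- Let α be a real number with −1 < α ≤ 1. Then for all real x, y, the Rα-disjunction x ∨α y = (1/(1+α))·(x + y + √(x² + y² − 2αxy)) satisfies x ∨α y ≥ 0 if and only if x ≥ 0 or y ≥ 0. -/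
/-! The scale factor `1/(1+α)` is positive, so only the sign of `x + y + √S` matters, where
`S = x² + y² - 2αxy`. When `x + y ≥ 0` both sides hold. When `x + y < 0` the sum is nonnegative
iff `(x + y)² ≤ S`, and `(x + y)² - S = 2(1+α)xy`, so this says `xy ≤ 0`, i.e. one of `x, y` is
nonnegative. -/

lemma neg_add_le_sqrt_iff_mul_nonpos {α x y : ℝ} (hα : -1 < α) (hxy : x + y < 0) :
    -(x + y) ≤ √(x^2 + y^2 - 2*α*x*y) ↔ x * y ≤ 0 := by
  have hgap : (-(x + y))^2 - (x^2 + y^2 - 2*α*x*y) = 2 * (1 + α) * (x * y) := by ring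
  rw [Real.le_sqrt' (by linarith), ← sub_nonpos, hgap, ← neg_nonneg, ← mul_neg,
    mul_nonneg_iff_of_pos_left (by linarith), neg_nonneg]

lemma mul_nonpos_iff_of_add_neg {x y : ℝ} (hxy : x + y < 0) : x * y ≤ 0 ↔ 0 ≤ x ∨ 0 ≤ y := by
  rw [mul_nonpos_iff]
  constructor
  · rintro (⟨hx, -⟩ | ⟨-, hy⟩)
    exacts [Or.inl hx, Or.inr hy]
  · rintro (hx | hy)
    exacts [Or.inl ⟨hx, by linarith⟩, Or.inr ⟨by linarith, hy⟩]

theorem stmt_4_general (α : ℝ) (hα : -1 < α) (x y : ℝ) :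
    (1/(1+α)) * (x + y + Real.sqrt (x^2 + y^2 - 2*α*x*y)) ≥ 0 ↔ x ≥ 0 ∨ y ≥ 0 := by
  have hscale : 0 < 1/(1+α) := one_div_pos.mpr (by linarith)
  rw [ge_iff_le, mul_nonneg_iff_of_pos_left hscale]
  rcases le_or_gt 0 (x + y) with hxy | hxy
  · have hsign : x ≥ 0 ∨ y ≥ 0 := by by_contra! h; linarith [h.1, h.2]
    exact iff_of_true (add_nonneg hxy (Real.sqrt_nonneg _)) hsign
  · rw [← neg_le_iff_add_nonneg', neg_add_le_sqrt_iff_mul_nonpos hα hxy,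
      mul_nonpos_iff_of_add_neg hxy]

theorem stmt_4 (α : ℝ) (hα : -1 < α) (hα' : α ≤ 1) (x y : ℝ) :
    (1/(1+α)) * (x + y + Real.sqrt (x^2 + y^2 - 2*α*x*y)) ≥ 0 ↔ x ≥ 0 ∨ y ≥ 0 :=
  stmt_4_general α hα x y
end

section
/- Let φ₁, φ₂ : E → ℝ be functions on a set E, and define D₁ = {p : φ₁(p) ≥ 0}, D₂ = {p : φ₂(p) ≥ 0}. Then D₁ ∩ D₂ = {p ∈ E : φ₁(p) + φ₂(p) − √(φ₁(p)² + φ₂(p)²) ≥ 0} and D₁ ∪ D₂ = {p ∈ E : φ₁(p) + φ₂(p) + √(φ₁(p)² + φ₂(p)²) ≥ 0}. -/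
/-!
Squaring, `√(u² + v²) ≤ u + v` holds exactly when `u + v ≥ 0` and `(u + v)² - (u² + v²) = 2uv ≥ 0`,
i.e. when `u, v ≥ 0`. Since `u + v + √(u² + v²)` is minus the conjunction expression at `(-u, -v)`,
the disjunction is the De Morgan dual of the strict form of this criterion.
-/

namespace Real

theorem sqrt_sq_add_sq_le_add_iff (u v : ℝ) : √(u ^ 2 + v ^ 2) ≤ u + v ↔ 0 ≤ u ∧ 0 ≤ v := by
  rw [sqrt_le_iff]
  constructor
  · rintro ⟨hsum, hsq⟩
    have hprod : 0 ≤ u * v := by nlinarith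
    constructor <;> nlinarith
  · rintro ⟨hu, hv⟩
    exact ⟨add_nonneg hu hv, by nlinarith [mul_nonneg hu hv]⟩

theorem sqrt_sq_add_sq_lt_add_iff (u v : ℝ) : √(u ^ 2 + v ^ 2) < u + v ↔ 0 < u ∧ 0 < v := by
  constructor
  · intro h
    have hsum : 0 < u + v := (sqrt_nonneg _).trans_lt h
    rw [sqrt_lt' hsum] at h
    have hprod : 0 < u * v := by nlinarith
    constructor <;> nlinarith
  · rintro ⟨hu, hv⟩
    rw [sqrt_lt' (add_pos hu hv)]
    nlinarith [mul_pos hu hv]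

theorem neg_sqrt_sq_add_sq_le_add_iff (u v : ℝ) : -√(u ^ 2 + v ^ 2) ≤ u + v ↔ 0 ≤ u ∨ 0 ≤ v := by
  have h := sqrt_sq_add_sq_lt_add_iff (-u) (-v)
  rw [neg_sq, neg_sq, ← neg_add, neg_pos, neg_pos] at h
  rw [neg_le, ← not_lt, h, not_and_or, not_lt, not_lt]

end Real

theorem stmt_11 {E : Type*} (φ₁ φ₂ : E → ℝ) :
    {p : E | φ₁ p ≥ 0} ∩ {p : E | φ₂ p ≥ 0} =
      {p : E | φ₁ p + φ₂ p - Real.sqrt ((φ₁ p)^2 + (φ₂ p)^2) ≥ 0} ∧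
    {p : E | φ₁ p ≥ 0} ∪ {p : E | φ₂ p ≥ 0} =
      {p : E | φ₁ p + φ₂ p + Real.sqrt ((φ₁ p)^2 + (φ₂ p)^2) ≥ 0} := by
  refine ⟨Set.ext fun p => ?_, Set.ext fun p => ?_⟩
  · simp only [Set.mem_inter_iff, Set.mem_ofPred_eq, ge_iff_le, sub_nonneg]
    exact (Real.sqrt_sq_add_sq_le_add_iff _ _).symm
  · simp only [Set.mem_union, Set.mem_ofPred_eq, ge_iff_le]
    rw [← neg_le_iff_add_nonneg]
    exact (Real.neg_sqrt_sq_add_sq_le_add_iff _ _).symm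
end
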